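/- For all integers m and e, the tetrahedral index satisfies the three-term recurrence in the first variable: I_Δ(m+1, e) + (u^{-2m-e} - u^{-e} - u^{e}) · I_Δ(m,e) + I_Δ(m-1, e) = 0, where u plays the role of q^{1/2} (so u^{-2m-e} = q^{-m-e/2}, u^{±e} = q^{±e/2}). -/

import Mathlib

open scoped BigOperators

/-- Finite q-Pochhammer symbol `(a;q)_n = ∏_{i=0}^{n-1} (1 - a q^i)`. -/
noncomputable def qPoch (a q : ℂ) (n : ℕ) : ℂ :=
  ∏ i ∈ Finset.range n, (1 - a * q ^ i)

/-- Infinite q-Pochhammer symbol `(a;q)_∞ = ∏_{i=0}^{∞} (1 - a q^i)`. -/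
noncomputable def qPochInf (a q : ℂ) : ℂ :=
  ∏' i : ℕ, (1 - a * q ^ i)

/-- The `n`-th term of the series defining the tetrahedral index `I_Δ(m,e)`,
with `q = u^2` and vanishing below `e₊ = max(-e,0)`. -/
noncomputable def tetTerm (u : ℂ) (m e : ℤ) (n : ℕ) : ℂ :=
  if (-e).toNat ≤ n then
    (-1 : ℂ) ^ n * u ^ ((n : ℤ) * ((n : ℤ) + 1) - (2 * (n : ℤ) + e) * m) /
      (qPoch (u ^ 2) (u ^ 2) n * qPoch (u ^ 2) (u ^ 2) ((n : ℤ) + e).toNat)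
  else 0

/-- The tetrahedral index `I_Δ(m,e) = Σ_{n=e₊}^∞ (-1)^n u^{n(n+1)-(2n+e)m}/((q;q)_n (q;q)_{n+e})`. -/
noncomputable def tetIndex (u : ℂ) (m e : ℤ) : ℂ := ∑' n : ℕ, tetTerm u m e n

/-!
Write `q = u²` and `T_m(n)` for the terms of `I_Δ(m,e)`. Shifting `m` by `±1` multiplies `T_m(n)`
by `q^{∓(n+e/2)}`, so termwise the operator `I(m+1) - (q^{-e/2} + q^{e/2}) I(m) + I(m-1)`
multiplies `T_m(n)` by `q^{-n-e/2} (1 - q^n) (1 - q^{n+e})`. This factor cancels the last factors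
of the two q-Pochhammer symbols in the denominator and turns the term into `-q^{-m-e/2} T_m(n-1)`
(the term `n = 0` vanishes). Summing over `n` gives `-q^{-m-e/2} I(m)`, which is the recurrence.
-/

open Filter Finset

lemma qPoch_succ (a q : ℂ) (n : ℕ) : qPoch a q (n + 1) = qPoch a q n * (1 - a * q ^ n) :=
  prod_range_succ _ _

lemma qPoch_ne_zero {a q : ℂ} (ha : ‖a‖ < 1) (hq : ‖q‖ ≤ 1) (n : ℕ) : qPoch a q n ≠ 0 := by
  refine prod_ne_zero_iff.mpr fun i _ => sub_ne_zero.mpr fun h => ?_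
  have hlt : ‖a * q ^ i‖ < 1 :=
    calc ‖a * q ^ i‖ ≤ ‖a‖ * 1 := by
          rw [norm_mul, norm_pow]
          exact mul_le_mul_of_nonneg_left (pow_le_one₀ (norm_nonneg _) hq) (norm_nonneg _)
      _ < 1 := by rwa [mul_one]
  rw [← h, norm_one] at hlt
  exact hlt.false

lemma one_sub_norm_sq_le_norm_one_sub_zpow {u : ℂ} (hu : ‖u‖ ≤ 1) {k : ℤ} (hk : 0 < k) :
    1 - ‖u‖ ^ 2 ≤ ‖1 - u ^ (2 * k)‖ := by
  lift k to ℕ using hk.le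
  have hpow : ‖u ^ (2 * (k : ℤ))‖ ≤ ‖u‖ ^ 2 := by
    rw [show 2 * (k : ℤ) = ((2 * k : ℕ) : ℤ) by push_cast; rfl, zpow_natCast, norm_pow]
    exact pow_le_pow_of_le_one (norm_nonneg u) hu (by omega)
  have := norm_sub_norm_le (1 : ℂ) (u ^ (2 * (k : ℤ)))
  rw [norm_one] at this
  linarith

noncomputable def tetWeight (u : ℂ) (e : ℤ) (n : ℕ) : ℂ :=
  u ^ (-(2 * (n : ℤ) + e)) * ((1 - u ^ (2 * (n : ℤ))) * (1 - u ^ (2 * ((n : ℤ) + e))))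

lemma tetWeight_zero (u : ℂ) (e : ℤ) : tetWeight u e 0 = 0 := by
  simp [tetWeight]

section tetTerm

variable {u : ℂ}

lemma tetTerm_of_lt {m e : ℤ} {n : ℕ} (h : n < (-e).toNat) : tetTerm u m e n = 0 :=
  if_neg (by omega)

lemma tetTerm_add (hu : u ≠ 0) (m k e : ℤ) (n : ℕ) :
    tetTerm u (m + k) e n = u ^ (-(2 * (n : ℤ) + e) * k) * tetTerm u m e n := by
  unfold tetTerm
  split_ifs
  · rw [show (n : ℤ) * (n + 1) - (2 * n + e) * (m + k)
        = -(2 * (n : ℤ) + e) * k + ((n : ℤ) * (n + 1) - (2 * n + e) * m) by ring,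
      zpow_add₀ hu]
    ring
  · rw [mul_zero]

lemma tetTerm_add_one_sub_add_tetTerm_sub_one (hu : u ≠ 0) (m e : ℤ) (n : ℕ) :
    tetTerm u (m + 1) e n - (u ^ (-e) + u ^ e) * tetTerm u m e n + tetTerm u (m - 1) e n =
      tetWeight u e n * tetTerm u m e n := by
  rw [tetTerm_add hu m 1, sub_eq_add_neg m 1, tetTerm_add hu m (-1), tetWeight]
  simp only [mul_one, mul_neg, neg_neg, neg_add, mul_add, zpow_add₀ hu, zpow_neg, zpow_mul]
  field_simp
  simp only [sq, mul_zpow]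
  ring

lemma mul_tetTerm_succ (hu : u ≠ 0) (hu1 : ‖u‖ < 1) (m e : ℤ) (n : ℕ) :
    (1 - u ^ (2 * ((n : ℤ) + 1))) * (1 - u ^ (2 * ((n : ℤ) + 1 + e))) * tetTerm u m e (n + 1) =
      -u ^ (2 * ((n : ℤ) + 1 - m)) * tetTerm u m e n := by
  rcases lt_or_ge n (-e).toNat with hlt | hge
  · rw [tetTerm_of_lt hlt, mul_zero]
    rcases lt_or_eq_of_le (Nat.succ_le_of_lt hlt) with hlt' | heq
    · rw [tetTerm_of_lt hlt', mul_zero]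
    · rw [show (n : ℤ) + 1 + e = 0 by omega, mul_zero, zpow_zero, sub_self, mul_zero, zero_mul]
  obtain ⟨k, hk⟩ : ∃ k : ℕ, (k : ℤ) = n + e := ⟨((n : ℤ) + e).toNat, by omega⟩
  have hq : ‖u ^ 2‖ < 1 := by rw [norm_pow]; nlinarith [norm_nonneg u]
  have hP := qPoch_ne_zero hq hq.le n
  have hQ := qPoch_ne_zero hq hq.le k
  have hx : u ^ 2 * (u ^ 2) ^ n = u ^ (2 * ((n : ℤ) + 1)) := by
    rw [← pow_succ', zpow_mul]; norm_cast
  have hy : u ^ 2 * (u ^ 2) ^ k = u ^ (2 * ((n : ℤ) + 1 + e)) := by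
    rw [← pow_succ', show (n : ℤ) + 1 + e = ((k + 1 : ℕ) : ℤ) by push_cast; omega, zpow_mul]
    norm_cast
  have hA : 1 - u ^ (2 * ((n : ℤ) + 1)) ≠ 0 :=
    hx ▸ right_ne_zero_of_mul (qPoch_succ _ _ n ▸ qPoch_ne_zero hq hq.le (n + 1))
  have hB : 1 - u ^ (2 * ((n : ℤ) + 1 + e)) ≠ 0 :=
    hy ▸ right_ne_zero_of_mul (qPoch_succ _ _ k ▸ qPoch_ne_zero hq hq.le (k + 1))
  simp only [tetTerm, if_pos hge, if_pos (show (-e).toNat ≤ n + 1 by omega)]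
  rw [show ((n + 1 : ℕ) : ℤ) + e = ((k + 1 : ℕ) : ℤ) by push_cast; omega,
    show (n : ℤ) + e = k by omega, Int.toNat_natCast, Int.toNat_natCast, qPoch_succ, qPoch_succ,
    show ((n + 1 : ℕ) : ℤ) * ((n + 1 : ℕ) + 1) - (2 * ((n + 1 : ℕ) : ℤ) + e) * m
      = ((n : ℤ) * (n + 1) - (2 * n + e) * m) + 2 * ((n : ℤ) + 1 - m) by push_cast; ring,
    zpow_add₀ hu, hx, hy]
  field_simp
  ring

lemma tetWeight_succ_mul_tetTerm_succ (hu : u ≠ 0) (hu1 : ‖u‖ < 1) (m e : ℤ) (n : ℕ) :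
    tetWeight u e (n + 1) * tetTerm u m e (n + 1) = -u ^ (-2 * m - e) * tetTerm u m e n := by
  rw [tetWeight, Nat.cast_succ, mul_assoc, mul_tetTerm_succ hu hu1, ← mul_assoc, mul_neg,
    ← zpow_add₀ hu]
  ring_nf

lemma summable_tetTerm (hu : u ≠ 0) (hu1 : ‖u‖ < 1) (m e : ℤ) : Summable (tetTerm u m e) := by
  set r := 1 - ‖u‖ ^ 2
  have hr : 0 < r := by nlinarith [norm_nonneg u]
  have hratio : Tendsto (fun n : ℕ => u ^ (2 * ((n : ℤ) + 1 - m))) atTop (nhds 0) := by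
    have hgeom := (tendsto_pow_atTop_nhds_zero_of_norm_lt_one
      (show ‖u ^ 2‖ < 1 by rw [norm_pow]; nlinarith [norm_nonneg u])).const_mul (u ^ (2 * (1 - m)))
    rw [mul_zero] at hgeom
    refine hgeom.congr fun n => ?_
    rw [show 2 * ((n : ℤ) + 1 - m) = 2 * (1 - m) + 2 * n by ring, zpow_add₀ hu, zpow_mul u 2 n]
    norm_cast
  refine summable_of_ratio_norm_eventually_le (r := 1 / 2) (by norm_num) ?_
  filter_upwards [hratio.norm.eventually (ge_mem_nhds (show ‖(0 : ℂ)‖ < r ^ 2 / 2 by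
    rw [norm_zero]; positivity)), eventually_ge_atTop (-e).toNat] with n hsmall hn
  have hlow k (hk : 0 < k) := one_sub_norm_sq_le_norm_one_sub_zpow hu1.le hk
  have hnorm := congrArg norm (mul_tetTerm_succ hu hu1 m e n)
  rw [norm_mul, norm_mul, norm_mul, norm_neg] at hnorm
  have hfactors : r ^ 2 ≤ ‖1 - u ^ (2 * ((n : ℤ) + 1))‖ * ‖1 - u ^ (2 * ((n : ℤ) + 1 + e))‖ := by
    rw [sq]
    exact mul_le_mul (hlow _ (by omega)) (hlow _ (by omega)) hr.le (norm_nonneg _)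
  have : r ^ 2 * ‖tetTerm u m e (n + 1)‖ ≤ r ^ 2 * (1 / 2 * ‖tetTerm u m e n‖) :=
    calc r ^ 2 * ‖tetTerm u m e (n + 1)‖
        ≤ ‖1 - u ^ (2 * ((n : ℤ) + 1))‖ * ‖1 - u ^ (2 * ((n : ℤ) + 1 + e))‖ *
            ‖tetTerm u m e (n + 1)‖ := by gcongr
      _ = ‖u ^ (2 * ((n : ℤ) + 1 - m))‖ * ‖tetTerm u m e n‖ := hnorm
      _ ≤ r ^ 2 / 2 * ‖tetTerm u m e n‖ := by gcongr
      _ = r ^ 2 * (1 / 2 * ‖tetTerm u m e n‖) := by ring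
  exact le_of_mul_le_mul_left this (by positivity)

lemma tsum_tetWeight_mul_tetTerm (hu : u ≠ 0) (hu1 : ‖u‖ < 1) (m e : ℤ) :
    ∑' n, tetWeight u e n * tetTerm u m e n = -u ^ (-2 * m - e) * tetIndex u m e := by
  have hshift : (fun n => tetWeight u e (n + 1) * tetTerm u m e (n + 1)) =
      fun n => -u ^ (-2 * m - e) * tetTerm u m e n :=
    funext (tetWeight_succ_mul_tetTerm_succ hu hu1 m e)
  rw [tsum_eq_zero_add' (hshift ▸ (summable_tetTerm hu hu1 m e).mul_left _), hshift,
    tetWeight_zero, zero_mul, zero_add, tsum_mul_left, tetIndex]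

end tetTerm

/-- three-term recurrence in `m`:
`I_Δ(m+1,e) + (q^{-m-e/2} - q^{-e/2} - q^{e/2}) I_Δ(m,e) + I_Δ(m-1,e) = 0`, `u = q^{1/2}`. -/
theorem stmt_6 (u : ℂ) (hu0 : 0 < ‖u‖) (hu1 : ‖u‖ < 1) (m e : ℤ) :
    tetIndex u (m + 1) e + (u ^ (-2 * m - e) - u ^ (-e) - u ^ e) * tetIndex u m e +
      tetIndex u (m - 1) e = 0 := by
  have hu : u ≠ 0 := norm_pos_iff.mp hu0
  have hS (k : ℤ) := summable_tetTerm hu hu1 k e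
  have hcombined : tetIndex u (m + 1) e - (u ^ (-e) + u ^ e) * tetIndex u m e +
      tetIndex u (m - 1) e = -u ^ (-2 * m - e) * tetIndex u m e :=
    calc _ = ∑' n, (tetTerm u (m + 1) e n - (u ^ (-e) + u ^ e) * tetTerm u m e n +
          tetTerm u (m - 1) e n) := by
          rw [((hS _).sub ((hS m).mul_left _)).tsum_add (hS _), (hS _).tsum_sub ((hS m).mul_left _),
            tsum_mul_left, tetIndex, tetIndex, tetIndex]
      _ = ∑' n, tetWeight u e n * tetTerm u m e n :=
          tsum_congr (tetTerm_add_one_sub_add_tetTerm_sub_one hu m e)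
      _ = _ := tsum_tetWeight_mul_tetTerm hu hu1 m e
  linear_combination hcombined
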